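/- For every real x > 0, every h ∈ ℂ with Re(h) > 1, and every s ∈ ℂ with Re(s) > 1, the following integral representation holds: (1/Γ(s)) · ∫_0^∞ t^{s−2} · F_q(−t, x | h) dt = ζ_q(s, x | h), where F_q(−t, x | h) = t · Σ_{n=0}^{∞} q^{hn+x}·exp(−[x+n]_q·t) + (h−1)(1−q) · Σ_{n=0}^{∞} q^{(h−1)n}·exp(−[x+n]_q·t), the integral is over real t > 0 with t^{s−2} = exp((s−2)·Real.log t), and both the integral and all series converge absolutely. -/

import Mathlib

open Complex Finset Filter

/-- Complex power `q^z := exp(z·log q)` for a real base `q`. -/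
noncomputable def qcpow (q : ℝ) (z : ℂ) : ℂ := Complex.exp (z * (Real.log q : ℂ))

/-- The complex `q`-number `[z]_q = (1 - q^z)/(1 - q)`. -/
noncomputable def qnum (q : ℝ) (z : ℂ) : ℂ := (1 - qcpow q z) / (1 - (q : ℂ))

/-- The real `q`-number `[y]_q = (1 - q^y)/(1 - q)` for real `y`. -/
noncomputable def qnumR (q : ℝ) (y : ℝ) : ℝ := (1 - Real.exp (y * Real.log q)) / (1 - q)

/-- The `(h,q)`-Bernoulli polynomial
`β_{n,q}^h(x) = (1-q)^{-n} ∑_{l=0}^{n} C(n,l) (-1)^l q^{lx} (l+h-1)/[l+h-1]_q`. -/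
noncomputable def qbeta (q : ℝ) (h : ℂ) (n : ℕ) (x : ℝ) : ℂ :=
  (1 - (q : ℂ))⁻¹ ^ n * ∑ l ∈ Finset.range (n + 1),
    (n.choose l : ℂ) * (-1) ^ l * qcpow q ((l : ℂ) * (x : ℂ)) *
      (((l : ℂ) + h - 1) / qnum q ((l : ℂ) + h - 1))

/-- The Hurwitz-type `(h,q)`-zeta function
`ζ_q(s, x | h) = ∑ q^{hn+x}/[n+x]_q^s + ((h-1)(1-q)/(s-1)) ∑ q^{(h-1)n}/[n+x]_q^{s-1}`,
where `[n+x]_q^s = exp(s·log [n+x]_q)`. -/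
noncomputable def hqZetaH (q : ℝ) (h s : ℂ) (x : ℝ) : ℂ :=
  (∑' n : ℕ, qcpow q (h * (n : ℂ) + (x : ℂ)) /
      Complex.exp (s * (Real.log (qnumR q ((n : ℝ) + x)) : ℂ))) +
  ((h - 1) * (1 - (q : ℂ)) / (s - 1)) *
    ∑' n : ℕ, qcpow q ((h - 1) * (n : ℂ)) /
      Complex.exp ((s - 1) * (Real.log (qnumR q ((n : ℝ) + x)) : ℂ))

/-- The `(h,q)`-zeta function
`ζ_q(s | h) = ∑_{n≥1} q^{hn}/[n]_q^s + ((h-1)(1-q)/(s-1)) ∑_{n≥1} q^{(h-1)n}/[n]_q^{s-1}`. -/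
noncomputable def hqZeta (q : ℝ) (h s : ℂ) : ℂ :=
  (∑' n : ℕ, qcpow q (h * ((n : ℂ) + 1)) /
      Complex.exp (s * (Real.log (qnumR q ((n : ℝ) + 1)) : ℂ))) +
  ((h - 1) * (1 - (q : ℂ)) / (s - 1)) *
    ∑' n : ℕ, qcpow q ((h - 1) * ((n : ℂ) + 1)) /
      Complex.exp ((s - 1) * (Real.log (qnumR q ((n : ℝ) + 1)) : ℂ))

/-- `F_q(-t, x | h) = t ∑ q^{hn+x} e^{-[x+n]_q t} + (h-1)(1-q) ∑ q^{(h-1)n} e^{-[x+n]_q t}`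
for real `t`. -/
noncomputable def FqNeg (q : ℝ) (h : ℂ) (x t : ℝ) : ℂ :=
  (t : ℂ) * (∑' n : ℕ, qcpow q (h * (n : ℂ) + (x : ℂ)) *
      Complex.exp (-((qnumR q (x + n) : ℂ)) * (t : ℂ))) +
  (h - 1) * (1 - (q : ℂ)) *
    ∑' n : ℕ, qcpow q ((h - 1) * (n : ℂ)) *
      Complex.exp (-((qnumR q (x + n) : ℂ)) * (t : ℂ))

/-!
For `t > 0` the integrand is `t^{s-1} A(t) + (h-1)(1-q) t^{s-2} B(t)`, where `A` and `B` are
series `∑ cₙ e^{-[x+n]_q t}` with absolutely summable (geometrically decaying) coefficients and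
frequencies `[x+n]_q ≥ [x]_q > 0`. Such a series is bounded by a multiple of `e^{-[x]_q t}`, so its
Mellin transform converges for `Re s > 0`, and integrating termwise gives
`Γ(s) ∑ cₙ [x+n]_q^{-s}`. Taking the transform of `A` at `s` and of `B` at `s - 1`, the relation
`Γ(s) = (s-1) Γ(s-1)` produces the factor `1/(s-1)` in the second term of `ζ_q(s, x | h)`.
-/

open MeasureTheory Set Asymptotics

lemma Complex.ofReal_cpow_eq_exp_mul_log {x : ℝ} (hx : 0 < x) (s : ℂ) :
    (x : ℂ) ^ s = Complex.exp (s * (Real.log x : ℂ)) := by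
  rw [Complex.cpow_def_of_ne_zero (Complex.ofReal_ne_zero.2 hx.ne'), ← Complex.ofReal_log hx.le,
    mul_comm]

lemma exp_sub_two_mul_log_mul_add {t : ℝ} (ht : 0 < t) (s A B c : ℂ) :
    Complex.exp ((s - 2) * (Real.log t : ℂ)) * (t * A + c * B) =
      (t : ℂ) ^ (s - 1) • A + c * ((t : ℂ) ^ (s - 1 - 1) • B) := by
  have ht₀ : (t : ℂ) ≠ 0 := Complex.ofReal_ne_zero.2 ht.ne'
  rw [show s - 2 = s - 1 - 1 by ring, ← Complex.ofReal_cpow_eq_exp_mul_log ht,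
    Complex.cpow_sub _ _ ht₀, Complex.cpow_one, smul_eq_mul, smul_eq_mul]
  field_simp

lemma Complex.one_div_Gamma_mul_add {s : ℂ} (hs : 0 < (s - 1).re) (A B c : ℂ) :
    1 / Complex.Gamma s * (Complex.Gamma s * A + c * (Complex.Gamma (s - 1) * B)) =
      A + c / (s - 1) * B := by
  have hs_ne : s - 1 ≠ 0 := fun h0 => by simp [h0] at hs
  have hΓ : Complex.Gamma s = (s - 1) * Complex.Gamma (s - 1) := by
    simpa using Complex.Gamma_add_one (s - 1) hs_ne
  have hΓ_ne := Complex.Gamma_ne_zero_of_re_pos hs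
  rw [hΓ]
  field_simp

lemma Complex.norm_exp_neg_ofReal_mul (p t : ℝ) :
    ‖Complex.exp (-(p : ℂ) * t)‖ = Real.exp (-p * t) := by
  rw [← Complex.ofReal_neg, ← Complex.ofReal_mul, Complex.norm_exp_ofReal]

section ExpDecaySeries

variable {a : ℕ → ℂ} {p : ℕ → ℝ}

noncomputable def expDecaySeries (a : ℕ → ℂ) (p : ℕ → ℝ) (t : ℝ) : ℂ :=
  ∑' n, a n * Complex.exp (-(p n : ℂ) * t)

lemma norm_mul_exp_neg_le {p₀ : ℝ} (hp : ∀ n, p₀ ≤ p n) (n : ℕ) {t : ℝ} (ht : 0 ≤ t) :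
    ‖a n * Complex.exp (-(p n : ℂ) * t)‖ ≤ ‖a n‖ * Real.exp (-p₀ * t) := by
  rw [norm_mul, Complex.norm_exp_neg_ofReal_mul]
  gcongr
  exact hp n

lemma summable_mul_exp_neg (ha : Summable fun n => ‖a n‖) (hp : ∀ n, 0 ≤ p n) {t : ℝ}
    (ht : 0 ≤ t) : Summable fun n => a n * Complex.exp (-(p n : ℂ) * t) :=
  Summable.of_norm_bounded (ha.mul_right (Real.exp (-0 * t))) (norm_mul_exp_neg_le hp · ht)

lemma norm_expDecaySeries_le (ha : Summable fun n => ‖a n‖) {p₀ : ℝ}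
    (hp : ∀ n, p₀ ≤ p n) {t : ℝ} (ht : 0 ≤ t) :
    ‖expDecaySeries a p t‖ ≤ (∑' n, ‖a n‖) * Real.exp (-p₀ * t) := by
  have hterm (n : ℕ) := norm_mul_exp_neg_le (a := a) hp n ht
  calc ‖expDecaySeries a p t‖
      ≤ ∑' n, ‖a n * Complex.exp (-(p n : ℂ) * t)‖ :=
        norm_tsum_le_tsum_norm ((ha.mul_right _).of_nonneg_of_le (fun _ => norm_nonneg _) hterm)
    _ ≤ ∑' n, ‖a n‖ * Real.exp (-p₀ * t) :=
        ((ha.mul_right _).of_nonneg_of_le (fun _ => norm_nonneg _) hterm).tsum_le_tsum hterm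
          (ha.mul_right _)
    _ = (∑' n, ‖a n‖) * Real.exp (-p₀ * t) := tsum_mul_right

lemma continuousOn_expDecaySeries (ha : Summable fun n => ‖a n‖) (hp : ∀ n, 0 ≤ p n) :
    ContinuousOn (expDecaySeries a p) (Ici 0) := by
  refine continuousOn_tsum (fun n => by fun_prop) ha fun n t ht => ?_
  simpa using norm_mul_exp_neg_le hp n (mem_Ici.1 ht)

lemma mellinConvergent_expDecaySeries (ha : Summable fun n => ‖a n‖) {p₀ : ℝ} (hp₀ : 0 < p₀)
    (hp : ∀ n, p₀ ≤ p n) {s : ℂ} (hs : 0 < s.re) : MellinConvergent (expDecaySeries a p) s := by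
  have hp_nonneg : ∀ n, 0 ≤ p n := fun n => hp₀.le.trans (hp n)
  have hdecay : expDecaySeries a p =O[𝓟 (Ioi 0)] fun t => Real.exp (-p₀ * t) :=
    IsBigO.of_bound _ <| eventually_principal.2 fun t ht => by
      simpa using norm_expDecaySeries_le ha hp (le_of_lt ht)
  have hexp_le_one : (fun t => Real.exp (-p₀ * t)) =O[𝓟 (Ioi 0)] (· ^ (-(0 : ℝ))) :=
    IsBigO.of_bound 1 <| eventually_principal.2 fun t (ht : 0 < t) => by
      rw [neg_zero, Real.rpow_zero, norm_one, mul_one, Real.norm_of_nonneg (Real.exp_pos _).le,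
        Real.exp_le_one_iff]
      nlinarith
  refine mellinConvergent_of_isBigO_rpow_exp hp₀
    ((continuousOn_expDecaySeries ha hp_nonneg).mono Ioi_subset_Ici_self |>.locallyIntegrableOn
      measurableSet_Ioi) (hdecay.mono (le_principal_iff.2 (Ioi_mem_atTop 0)))
    ((hdecay.trans hexp_le_one).mono inf_le_right) (by simpa using hs)

lemma summable_norm_div_rpow (ha : Summable fun n => ‖a n‖) {p₀ : ℝ} (hp₀ : 0 < p₀)
    (hp : ∀ n, p₀ ≤ p n) {σ : ℝ} (hσ : 0 ≤ σ) : Summable fun n => ‖a n‖ / p n ^ σ := by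
  have hp_pos : ∀ n, 0 < p n := fun n => hp₀.trans_le (hp n)
  refine (ha.div_const (p₀ ^ σ)).of_nonneg_of_le (fun n => div_nonneg (norm_nonneg _)
    (Real.rpow_nonneg (hp_pos n).le σ)) fun n => ?_
  gcongr
  exact hp n

lemma summable_div_cpow (ha : Summable fun n => ‖a n‖) {p₀ : ℝ} (hp₀ : 0 < p₀)
    (hp : ∀ n, p₀ ≤ p n) {s : ℂ} (hs : 0 ≤ s.re) : Summable fun n => a n / (p n : ℂ) ^ s := by
  refine Summable.of_norm ((summable_norm_div_rpow ha hp₀ hp hs).congr fun n => ?_)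
  rw [norm_div, norm_cpow_eq_rpow_re_of_pos (hp₀.trans_le (hp n))]

lemma mellin_expDecaySeries (ha : Summable fun n => ‖a n‖) {p₀ : ℝ} (hp₀ : 0 < p₀)
    (hp : ∀ n, p₀ ≤ p n) {s : ℂ} (hs : 0 < s.re) :
    mellin (expDecaySeries a p) s = Complex.Gamma s * ∑' n, a n / (p n : ℂ) ^ s := by
  have hp_pos : ∀ n, 0 < p n := fun n => hp₀.trans_le (hp n)
  have hsum := hasSum_mellin (F := expDecaySeries a p) (fun n => Or.inr (hp_pos n)) hs
    (fun t ht => ?_) (summable_norm_div_rpow ha hp₀ hp hs.le)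
  · rw [← hsum.tsum_eq, ← tsum_mul_left]
    simp only [mul_div_assoc]
  · have hofReal (n : ℕ) : Complex.exp (-(p n : ℂ) * t) = (Real.exp (-p n * t) : ℂ) := by
      push_cast; rfl
    simpa only [expDecaySeries, hofReal] using
      (summable_mul_exp_neg ha (fun n => (hp_pos n).le) (le_of_lt ht)).hasSum

end ExpDecaySeries

section QNumbers

variable {q : ℝ}

lemma qcpow_add (q : ℝ) (z w : ℂ) : qcpow q (z + w) = qcpow q z * qcpow q w := by
  rw [qcpow, qcpow, qcpow, add_mul, Complex.exp_add]

lemma qcpow_mul_natCast (q : ℝ) (w : ℂ) (n : ℕ) : qcpow q (w * n) = qcpow q w ^ n := by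
  rw [qcpow, qcpow, ← Complex.exp_nat_mul]
  ring_nf

lemma norm_qcpow_lt_one (hq0 : 0 < q) (hq1 : q < 1) {w : ℂ} (hw : 0 < w.re) :
    ‖qcpow q w‖ < 1 := by
  rw [qcpow, Complex.norm_exp, Real.exp_lt_one_iff, Complex.re_mul_ofReal]
  exact mul_neg_of_pos_of_neg hw (Real.log_neg hq0 hq1)

lemma summable_norm_qcpow_mul_natCast (hq0 : 0 < q) (hq1 : q < 1) {w : ℂ} (hw : 0 < w.re) :
    Summable fun n : ℕ => ‖qcpow q (w * n)‖ := by
  simpa only [qcpow_mul_natCast] using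
    summable_norm_geometric_of_norm_lt_one (norm_qcpow_lt_one hq0 hq1 hw)

lemma qnumR_pos (hq0 : 0 < q) (hq1 : q < 1) {y : ℝ} (hy : 0 < y) : 0 < qnumR q y := by
  have : Real.exp (y * Real.log q) < 1 :=
    Real.exp_lt_one_iff.2 (mul_neg_of_pos_of_neg hy (Real.log_neg hq0 hq1))
  exact div_pos (by linarith) (by linarith)

lemma qnumR_mono (hq0 : 0 < q) (hq1 : q < 1) : Monotone (qnumR q) := fun y z hyz => by
  have : Real.exp (z * Real.log q) ≤ Real.exp (y * Real.log q) :=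
    Real.exp_le_exp.2 (mul_le_mul_of_nonpos_right hyz (Real.log_neg hq0 hq1).le)
  unfold qnumR
  gcongr

end QNumbers

/-- integral representation
`(1/Γ(s)) ∫_0^∞ t^{s-2} F_q(-t, x | h) dt = ζ_q(s, x | h)` for `Re(s) > 1`,
with all series and the integral converging absolutely. -/
theorem hqZetaH_integral_representation (q : ℝ) (hq0 : 0 < q) (hq1 : q < 1)
    (h : ℂ) (hh : 1 < h.re) (x : ℝ) (hx : 0 < x) (s : ℂ) (hs : 1 < s.re) :
    (∀ t : ℝ, 0 < t →
      Summable (fun n : ℕ => qcpow q (h * (n : ℂ) + (x : ℂ)) *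
        Complex.exp (-((qnumR q (x + n) : ℂ)) * (t : ℂ))) ∧
      Summable (fun n : ℕ => qcpow q ((h - 1) * (n : ℂ)) *
        Complex.exp (-((qnumR q (x + n) : ℂ)) * (t : ℂ)))) ∧
    MeasureTheory.IntegrableOn
      (fun t : ℝ => Complex.exp ((s - 2) * (Real.log t : ℂ)) * FqNeg q h x t)
      (Set.Ioi 0) ∧
    Summable (fun n : ℕ => qcpow q (h * (n : ℂ) + (x : ℂ)) /
      Complex.exp (s * (Real.log (qnumR q ((n : ℝ) + x)) : ℂ))) ∧
    Summable (fun n : ℕ => qcpow q ((h - 1) * (n : ℂ)) /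
      Complex.exp ((s - 1) * (Real.log (qnumR q ((n : ℝ) + x)) : ℂ))) ∧
    (1 / Complex.Gamma s) *
        ∫ t in Set.Ioi (0 : ℝ), Complex.exp ((s - 2) * (Real.log t : ℂ)) * FqNeg q h x t =
      hqZetaH q h s x := by
  set a : ℕ → ℂ := fun n => qcpow q (h * n + x)
  set b : ℕ → ℂ := fun n => qcpow q ((h - 1) * n)
  set p : ℕ → ℝ := fun n => qnumR q (x + n)
  have hp₀ : 0 < qnumR q x := qnumR_pos hq0 hq1 hx
  have hp (n : ℕ) : qnumR q x ≤ p n := qnumR_mono hq0 hq1 (le_add_of_nonneg_right n.cast_nonneg)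
  have hp_nonneg (n : ℕ) : 0 ≤ p n := hp₀.le.trans (hp n)
  have ha : Summable fun n => ‖a n‖ := by
    simpa only [a, qcpow_add, norm_mul] using
      (summable_norm_qcpow_mul_natCast hq0 hq1 (by linarith)).mul_right ‖qcpow q x‖
  have hb : Summable fun n => ‖b n‖ :=
    summable_norm_qcpow_mul_natCast hq0 hq1 (by rw [Complex.sub_re, Complex.one_re]; linarith)
  have hs₁ : 0 < (s - 1).re := by rw [Complex.sub_re, Complex.one_re]; linarith
  have hA := mellinConvergent_expDecaySeries ha hp₀ hp (s := s) (by linarith)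
  have hB := mellinConvergent_expDecaySeries hb hp₀ hp hs₁
  have hintegrand : ∀ t ∈ Ioi (0 : ℝ), Complex.exp ((s - 2) * (Real.log t : ℂ)) * FqNeg q h x t =
      (t : ℂ) ^ (s - 1) • expDecaySeries a p t +
        (h - 1) * (1 - (q : ℂ)) * ((t : ℂ) ^ (s - 1 - 1) • expDecaySeries b p t) :=
    fun t ht => exp_sub_two_mul_log_mul_add ht s _ _ _
  have hzeta_term (z : ℂ) (n : ℕ) :
      Complex.exp (z * (Real.log (qnumR q ((n : ℝ) + x)) : ℂ)) = (p n : ℂ) ^ z := by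
    rw [Complex.ofReal_cpow_eq_exp_mul_log (qnumR_pos hq0 hq1 (by positivity)), add_comm]
  refine ⟨fun t ht => ⟨summable_mul_exp_neg ha hp_nonneg ht.le,
    summable_mul_exp_neg hb hp_nonneg ht.le⟩,
    (hA.add (hB.const_mul _)).congr_fun (fun t ht => (hintegrand t ht).symm) measurableSet_Ioi,
    by simpa only [hzeta_term] using summable_div_cpow ha hp₀ hp (s := s) (by linarith),
    by simpa only [hzeta_term] using summable_div_cpow hb hp₀ hp hs₁.le, ?_⟩
  have hmA := mellin_expDecaySeries ha hp₀ hp (s := s) (by linarith)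
  have hmB := mellin_expDecaySeries hb hp₀ hp hs₁
  rw [mellin] at hmA hmB
  rw [setIntegral_congr_fun measurableSet_Ioi hintegrand, integral_add hA (hB.const_mul _),
    integral_const_mul, hmA, hmB, hqZetaH]
  simp only [hzeta_term]
  exact Complex.one_div_Gamma_mul_add hs₁ _ _ _
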